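/- Let c be an integer and S_c = ℚ[a,b]/(b⁶, a⁴ − 7c²·a²b² − 6c³·ab³). Let P̃ = (1−b²)⁶·((1+a)⁴ − 7c²b²(1+a)² − 6c³b³(1+a))·((1−a)⁴ − 7c²b²(1−a)² + 6c³b³(1−a)) ∈ S_c and for each i let p_i = (−1)ⁱ times the homogeneous degree-2i component of P̃ (with deg a = deg b = 1). Then p₁²·p₂ = 384c³(15 + 56c²) · a³b⁵ in S_c. (Equivalently: the Pontryagin number p₁²p₂[Y¹⁶_c] equals 384c³(15+56c²).) -/
import Mathlib
set_option maxHeartbeats 1000000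
set_option linter.unusedTactic false


open MvPolynomial

namespace HW5

noncomputable def a : MvPolynomial (Fin 2) ℚ := X 0
noncomputable def b : MvPolynomial (Fin 2) ℚ := X 1

noncomputable def I (c : ℤ) : Ideal (MvPolynomial (Fin 2) ℚ) :=
  Ideal.span {b ^ 6, a ^ 4 - C (7 * (c : ℚ) ^ 2) * (a ^ 2 * b ^ 2) - C (6 * (c : ℚ) ^ 3) * (a * b ^ 3)}

noncomputable def Pt (c : ℤ) : MvPolynomial (Fin 2) ℚ :=
  (1 - b ^ 2) ^ 6 *
    ((1 + a) ^ 4 - C (7 * (c : ℚ) ^ 2) * b ^ 2 * (1 + a) ^ 2 - C (6 * (c : ℚ) ^ 3) * b ^ 3 * (1 + a)) *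
    ((1 - a) ^ 4 - C (7 * (c : ℚ) ^ 2) * b ^ 2 * (1 - a) ^ 2 + C (6 * (c : ℚ) ^ 3) * b ^ 3 * (1 - a))

/-- `p c i` is `(-1)^i` times the homogeneous degree-`2*i` component of `Pt c`
(with `deg a = deg b = 1`), i.e. the `i`-th Pontryagin class. -/
noncomputable def p (c : ℤ) (i : ℕ) : MvPolynomial (Fin 2) ℚ :=
  ((-1 : ℚ) ^ i) • homogeneousComponent (2 * i) (Pt c)

lemma term_hom (r s : ℚ) (k i j n : ℕ) (h : i + j = n) :
    MvPolynomial.IsHomogeneous (C r * C s ^ k * a ^ i * b ^ j) n := by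
  subst h
  have h0 : MvPolynomial.IsHomogeneous (C r * C s ^ k : MvPolynomial (Fin 2) ℚ) 0 := by
    simpa using (isHomogeneous_C (Fin 2) r).mul ((isHomogeneous_C (Fin 2) s).pow k)
  have h1 := (h0.mul (isHomogeneous_X_pow (R := ℚ) (0 : Fin 2) i)).mul
    (isHomogeneous_X_pow (R := ℚ) (1 : Fin 2) j)
  simpa [a, b] using h1

noncomputable def q0 (c : ℤ) : MvPolynomial (Fin 2) ℚ :=
  (C (1 : ℚ) * C ((c:ℚ)) ^ 0 * a ^ 0 * b ^ 0)

lemma hq0 (c : ℤ) : (q0 c).IsHomogeneous 0 := by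
  unfold q0
  repeat' apply IsHomogeneous.add
  all_goals exact term_hom _ _ _ _ _ _ (by norm_num)

noncomputable def q2 (c : ℤ) : MvPolynomial (Fin 2) ℚ :=
  (C (-6 : ℚ) * C ((c:ℚ)) ^ 0 * a ^ 0 * b ^ 2) + (C (-14 : ℚ) * C ((c:ℚ)) ^ 2 * a ^ 0 * b ^ 2) + (C (-4 : ℚ) * C ((c:ℚ)) ^ 0 * a ^ 2 * b ^ 0)

lemma hq2 (c : ℤ) : (q2 c).IsHomogeneous 2 := by
  unfold q2
  repeat' apply IsHomogeneous.add
  all_goals exact term_hom _ _ _ _ _ _ (by norm_num)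

noncomputable def q4 (c : ℤ) : MvPolynomial (Fin 2) ℚ :=
  (C (15 : ℚ) * C ((c:ℚ)) ^ 0 * a ^ 0 * b ^ 4) + (C (84 : ℚ) * C ((c:ℚ)) ^ 2 * a ^ 0 * b ^ 4) + (C (49 : ℚ) * C ((c:ℚ)) ^ 4 * a ^ 0 * b ^ 4) + (C (36 : ℚ) * C ((c:ℚ)) ^ 3 * a ^ 1 * b ^ 3) + (C (24 : ℚ) * C ((c:ℚ)) ^ 0 * a ^ 2 * b ^ 2) + (C (14 : ℚ) * C ((c:ℚ)) ^ 2 * a ^ 2 * b ^ 2) + (C (6 : ℚ) * C ((c:ℚ)) ^ 0 * a ^ 4 * b ^ 0)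

lemma hq4 (c : ℤ) : (q4 c).IsHomogeneous 4 := by
  unfold q4
  repeat' apply IsHomogeneous.add
  all_goals exact term_hom _ _ _ _ _ _ (by norm_num)

noncomputable def q6 (c : ℤ) : MvPolynomial (Fin 2) ℚ :=
  (C (-20 : ℚ) * C ((c:ℚ)) ^ 0 * a ^ 0 * b ^ 6) + (C (-210 : ℚ) * C ((c:ℚ)) ^ 2 * a ^ 0 * b ^ 6) + (C (-294 : ℚ) * C ((c:ℚ)) ^ 4 * a ^ 0 * b ^ 6) + (C (-36 : ℚ) * C ((c:ℚ)) ^ 6 * a ^ 0 * b ^ 6) + (C (-216 : ℚ) * C ((c:ℚ)) ^ 3 * a ^ 1 * b ^ 5) + (C (-84 : ℚ) * C ((c:ℚ)) ^ 5 * a ^ 1 * b ^ 5) + (C (-60 : ℚ) * C ((c:ℚ)) ^ 0 * a ^ 2 * b ^ 4) + (C (-84 : ℚ) * C ((c:ℚ)) ^ 2 * a ^ 2 * b ^ 4) + (C (-98 : ℚ) * C ((c:ℚ)) ^ 4 * a ^ 2 * b ^ 4) + (C (-24 : ℚ) * C ((c:ℚ)) ^ 3 * a ^ 3 * b ^ 3)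 + (C (-36 : ℚ) * C ((c:ℚ)) ^ 0 * a ^ 4 * b ^ 2) + (C (14 : ℚ) * C ((c:ℚ)) ^ 2 * a ^ 4 * b ^ 2) + (C (-4 : ℚ) * C ((c:ℚ)) ^ 0 * a ^ 6 * b ^ 0)

lemma hq6 (c : ℤ) : (q6 c).IsHomogeneous 6 := by
  unfold q6
  repeat' apply IsHomogeneous.add
  all_goals exact term_hom _ _ _ _ _ _ (by norm_num)

noncomputable def q8 (c : ℤ) : MvPolynomial (Fin 2) ℚ :=
  (C (15 : ℚ) * C ((c:ℚ)) ^ 0 * a ^ 0 * b ^ 8) + (C (280 : ℚ) * C ((c:ℚ)) ^ 2 * a ^ 0 * b ^ 8) + (C (735 : ℚ) * C ((c:ℚ)) ^ 4 * a ^ 0 * b ^ 8) + (C (216 : ℚ) * C ((c:ℚ)) ^ 6 * a ^ 0 * b ^ 8) + (C (540 : ℚ) * C ((c:ℚ)) ^ 3 * a ^ 1 * b ^ 7) + (C (504 : ℚ) * C ((c:ℚ)) ^ 5 * a ^ 1 * b ^ 7) + (C (80 : ℚ) * C ((c:ℚ)) ^ 0 * a ^ 2 * b ^ 6) + (C (210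 : ℚ) * C ((c:ℚ)) ^ 2 * a ^ 2 * b ^ 6) + (C (588 : ℚ) * C ((c:ℚ)) ^ 4 * a ^ 2 * b ^ 6) + (C (36 : ℚ) * C ((c:ℚ)) ^ 6 * a ^ 2 * b ^ 6) + (C (144 : ℚ) * C ((c:ℚ)) ^ 3 * a ^ 3 * b ^ 5) + (C (84 : ℚ) * C ((c:ℚ)) ^ 5 * a ^ 3 * b ^ 5) + (C (90 : ℚ) * C ((c:ℚ)) ^ 0 * a ^ 4 * b ^ 4) + (C (-84 : ℚ) * C ((c:ℚ)) ^ 2 * a ^ 4 * b ^ 4) + (C (49 : ℚ) * C ((c:ℚ)) ^ 4 * a ^ 4 * b ^ 4) + (C (-12 : ℚ) * C ((c:ℚ)) ^ 3 * a ^ 5 * b ^ 3) + (C (24 : ℚ) * C ((c:ℚ)) ^ 0 * a ^ 6 * b ^ 2) + (C (-14 : ℚ) * C ((c:ℚ)) ^ 2 * a ^ 6 * b ^ 2) + (C (1 : ℚ) * C ((c:ℚ)) ^ 0 * a ^ 8 * b ^ 0)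

lemma hq8 (c : ℤ) : (q8 c).IsHomogeneous 8 := by
  unfold q8
  repeat' apply IsHomogeneous.add
  all_goals exact term_hom _ _ _ _ _ _ (by norm_num)

noncomputable def q10 (c : ℤ) : MvPolynomial (Fin 2) ℚ :=
  (C (-6 : ℚ) * C ((c:ℚ)) ^ 0 * a ^ 0 * b ^ 10) + (C (-210 : ℚ) * C ((c:ℚ)) ^ 2 * a ^ 0 * b ^ 10) + (C (-980 : ℚ) * C ((c:ℚ)) ^ 4 * a ^ 0 * b ^ 10) + (C (-540 : ℚ) * C ((c:ℚ)) ^ 6 * a ^ 0 * b ^ 10) + (C (-720 : ℚ) * C ((c:ℚ)) ^ 3 * a ^ 1 * b ^ 9) + (C (-1260 : ℚ) * C ((c:ℚ)) ^ 5 * a ^ 1 * b ^ 9) + (C (-60 : ℚ) * C ((c:ℚ)) ^ 0 * a ^ 2 * b ^ 8) + (C (-280 : ℚ) * C ((c:ℚ)) ^ 2 * a ^ 2 * b ^ 8) + (C (-1470 : ℚ) * C ((c:ℚ)) ^ 4 * a ^ 2 * b ^ 8) + (C (-216 : ℚ) * C ((c:ℚ)) ^ 6 * a ^ 2 * b ^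 8) + (C (-360 : ℚ) * C ((c:ℚ)) ^ 3 * a ^ 3 * b ^ 7) + (C (-504 : ℚ) * C ((c:ℚ)) ^ 5 * a ^ 3 * b ^ 7) + (C (-120 : ℚ) * C ((c:ℚ)) ^ 0 * a ^ 4 * b ^ 6) + (C (210 : ℚ) * C ((c:ℚ)) ^ 2 * a ^ 4 * b ^ 6) + (C (-294 : ℚ) * C ((c:ℚ)) ^ 4 * a ^ 4 * b ^ 6) + (C (72 : ℚ) * C ((c:ℚ)) ^ 3 * a ^ 5 * b ^ 5) + (C (-60 : ℚ) * C ((c:ℚ)) ^ 0 * a ^ 6 * b ^ 4) + (C (84 : ℚ) * C ((c:ℚ)) ^ 2 * a ^ 6 * b ^ 4) + (C (-6 : ℚ) * C ((c:ℚ)) ^ 0 * a ^ 8 * b ^ 2)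

lemma hq10 (c : ℤ) : (q10 c).IsHomogeneous 10 := by
  unfold q10
  repeat' apply IsHomogeneous.add
  all_goals exact term_hom _ _ _ _ _ _ (by norm_num)

noncomputable def q12 (c : ℤ) : MvPolynomial (Fin 2) ℚ :=
  (C (1 : ℚ) * C ((c:ℚ)) ^ 0 * a ^ 0 * b ^ 12) + (C (84 : ℚ) * C ((c:ℚ)) ^ 2 * a ^ 0 * b ^ 12) + (C (735 : ℚ) * C ((c:ℚ)) ^ 4 * a ^ 0 * b ^ 12) + (C (720 : ℚ) * C ((c:ℚ)) ^ 6 * a ^ 0 * b ^ 12) + (C (540 : ℚ) * C ((c:ℚ)) ^ 3 * a ^ 1 * b ^ 11) + (C (1680 : ℚ) * C ((c:ℚ)) ^ 5 * a ^ 1 * b ^ 11) + (C (24 : ℚ) * C ((c:ℚ)) ^ 0 * a ^ 2 * b ^ 10) + (C (210 : ℚ) * C ((c:ℚ)) ^ 2 * a ^ 2 * b ^ 10) + (C (1960 : ℚ) * C ((c:ℚ)) ^ 4 * a ^ 2 * b ^ 10) + (C (540 : ℚ) * C ((c:ℚ)) ^ 6 * a ^ 2 * b ^ 10) + (C (480 :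 ℚ) * C ((c:ℚ)) ^ 3 * a ^ 3 * b ^ 9) + (C (1260 : ℚ) * C ((c:ℚ)) ^ 5 * a ^ 3 * b ^ 9) + (C (90 : ℚ) * C ((c:ℚ)) ^ 0 * a ^ 4 * b ^ 8) + (C (-280 : ℚ) * C ((c:ℚ)) ^ 2 * a ^ 4 * b ^ 8) + (C (735 : ℚ) * C ((c:ℚ)) ^ 4 * a ^ 4 * b ^ 8) + (C (-180 : ℚ) * C ((c:ℚ)) ^ 3 * a ^ 5 * b ^ 7) + (C (80 : ℚ) * C ((c:ℚ)) ^ 0 * a ^ 6 * b ^ 6) + (C (-210 : ℚ) * C ((c:ℚ)) ^ 2 * a ^ 6 * b ^ 6) + (C (15 : ℚ) * C ((c:ℚ)) ^ 0 * a ^ 8 * b ^ 4)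

lemma hq12 (c : ℤ) : (q12 c).IsHomogeneous 12 := by
  unfold q12
  repeat' apply IsHomogeneous.add
  all_goals exact term_hom _ _ _ _ _ _ (by norm_num)

noncomputable def q14 (c : ℤ) : MvPolynomial (Fin 2) ℚ :=
  (C (-14 : ℚ) * C ((c:ℚ)) ^ 2 * a ^ 0 * b ^ 14) + (C (-294 : ℚ) * C ((c:ℚ)) ^ 4 * a ^ 0 * b ^ 14) + (C (-540 : ℚ) * C ((c:ℚ)) ^ 6 * a ^ 0 * b ^ 14) + (C (-216 : ℚ) * C ((c:ℚ)) ^ 3 * a ^ 1 * b ^ 13) + (C (-1260 : ℚ) * C ((c:ℚ)) ^ 5 * a ^ 1 * b ^ 13) + (C (-4 : ℚ) * C ((c:ℚ)) ^ 0 * a ^ 2 * b ^ 12) + (C (-84 : ℚ) * C ((c:ℚ)) ^ 2 * a ^ 2 * b ^ 12) + (C (-1470 : ℚ) * C ((c:ℚ)) ^ 4 * a ^ 2 * b ^ 12) + (C (-720 : ℚ) * C ((c:ℚ)) ^ 6 * a ^ 2 * b ^ 12) + (C (-360 : ℚ) * C ((c:ℚ)) ^ 3 * a ^ 3 * b ^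 11) + (C (-1680 : ℚ) * C ((c:ℚ)) ^ 5 * a ^ 3 * b ^ 11) + (C (-36 : ℚ) * C ((c:ℚ)) ^ 0 * a ^ 4 * b ^ 10) + (C (210 : ℚ) * C ((c:ℚ)) ^ 2 * a ^ 4 * b ^ 10) + (C (-980 : ℚ) * C ((c:ℚ)) ^ 4 * a ^ 4 * b ^ 10) + (C (240 : ℚ) * C ((c:ℚ)) ^ 3 * a ^ 5 * b ^ 9) + (C (-60 : ℚ) * C ((c:ℚ)) ^ 0 * a ^ 6 * b ^ 8) + (C (280 : ℚ) * C ((c:ℚ)) ^ 2 * a ^ 6 * b ^ 8) + (C (-20 : ℚ) * C ((c:ℚ)) ^ 0 * a ^ 8 * b ^ 6)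

lemma hq14 (c : ℤ) : (q14 c).IsHomogeneous 14 := by
  unfold q14
  repeat' apply IsHomogeneous.add
  all_goals exact term_hom _ _ _ _ _ _ (by norm_num)

noncomputable def q16 (c : ℤ) : MvPolynomial (Fin 2) ℚ :=
  (C (49 : ℚ) * C ((c:ℚ)) ^ 4 * a ^ 0 * b ^ 16) + (C (216 : ℚ) * C ((c:ℚ)) ^ 6 * a ^ 0 * b ^ 16) + (C (36 : ℚ) * C ((c:ℚ)) ^ 3 * a ^ 1 * b ^ 15) + (C (504 : ℚ) * C ((c:ℚ)) ^ 5 * a ^ 1 * b ^ 15) + (C (14 : ℚ) * C ((c:ℚ)) ^ 2 * a ^ 2 * b ^ 14) + (C (588 : ℚ) * C ((c:ℚ)) ^ 4 * a ^ 2 * b ^ 14) + (C (540 : ℚ) * C ((c:ℚ)) ^ 6 * a ^ 2 * b ^ 14) + (C (144 : ℚ) * C ((c:ℚ)) ^ 3 * a ^ 3 * b ^ 13) + (C (1260 : ℚ) * C ((c:ℚ)) ^ 5 * a ^ 3 * b ^ 13) + (C (6 : ℚ) * C ((c:ℚ)) ^ 0 * a ^ 4 * b ^ 12) + (C (-84 :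 ℚ) * C ((c:ℚ)) ^ 2 * a ^ 4 * b ^ 12) + (C (735 : ℚ) * C ((c:ℚ)) ^ 4 * a ^ 4 * b ^ 12) + (C (-180 : ℚ) * C ((c:ℚ)) ^ 3 * a ^ 5 * b ^ 11) + (C (24 : ℚ) * C ((c:ℚ)) ^ 0 * a ^ 6 * b ^ 10) + (C (-210 : ℚ) * C ((c:ℚ)) ^ 2 * a ^ 6 * b ^ 10) + (C (15 : ℚ) * C ((c:ℚ)) ^ 0 * a ^ 8 * b ^ 8)

lemma hq16 (c : ℤ) : (q16 c).IsHomogeneous 16 := by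
  unfold q16
  repeat' apply IsHomogeneous.add
  all_goals exact term_hom _ _ _ _ _ _ (by norm_num)

noncomputable def q18 (c : ℤ) : MvPolynomial (Fin 2) ℚ :=
  (C (-36 : ℚ) * C ((c:ℚ)) ^ 6 * a ^ 0 * b ^ 18) + (C (-84 : ℚ) * C ((c:ℚ)) ^ 5 * a ^ 1 * b ^ 17) + (C (-98 : ℚ) * C ((c:ℚ)) ^ 4 * a ^ 2 * b ^ 16) + (C (-216 : ℚ) * C ((c:ℚ)) ^ 6 * a ^ 2 * b ^ 16) + (C (-24 : ℚ) * C ((c:ℚ)) ^ 3 * a ^ 3 * b ^ 15) + (C (-504 : ℚ) * C ((c:ℚ)) ^ 5 * a ^ 3 * b ^ 15) + (C (14 : ℚ) * C ((c:ℚ)) ^ 2 * a ^ 4 * b ^ 14) + (C (-294 : ℚ) * C ((c:ℚ)) ^ 4 * a ^ 4 * b ^ 14) + (C (72 : ℚ) * C ((c:ℚ)) ^ 3 * a ^ 5 * b ^ 13) + (C (-4 : ℚ) * C ((c:ℚ)) ^ 0 * a ^ 6 * b ^ 12) + (C (84 : ℚ) * C ((c:ℚ)) ^ 2 * a ^ 6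 * b ^ 12) + (C (-6 : ℚ) * C ((c:ℚ)) ^ 0 * a ^ 8 * b ^ 10)

lemma hq18 (c : ℤ) : (q18 c).IsHomogeneous 18 := by
  unfold q18
  repeat' apply IsHomogeneous.add
  all_goals exact term_hom _ _ _ _ _ _ (by norm_num)

noncomputable def q20 (c : ℤ) : MvPolynomial (Fin 2) ℚ :=
  (C (36 : ℚ) * C ((c:ℚ)) ^ 6 * a ^ 2 * b ^ 18) + (C (84 : ℚ) * C ((c:ℚ)) ^ 5 * a ^ 3 * b ^ 17) + (C (49 : ℚ) * C ((c:ℚ)) ^ 4 * a ^ 4 * b ^ 16) + (C (-12 : ℚ) * C ((c:ℚ)) ^ 3 * a ^ 5 * b ^ 15) + (C (-14 : ℚ) * C ((c:ℚ)) ^ 2 * a ^ 6 * b ^ 14) + (C (1 : ℚ) * C ((c:ℚ)) ^ 0 * a ^ 8 * b ^ 12)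

lemma hq20 (c : ℤ) : (q20 c).IsHomogeneous 20 := by
  unfold q20
  repeat' apply IsHomogeneous.add
  all_goals exact term_hom _ _ _ _ _ _ (by norm_num)

lemma decomp (c : ℤ) : Pt c = q0 c + q2 c + q4 c + q6 c + q8 c + q10 c + q12 c + q14 c + q16 c + q18 c + q20 c := by
  unfold Pt q0 q2 q4 q6 q8 q10 q12 q14 q16 q18 q20 a b
  simp only [map_mul, map_pow, map_ofNat, map_neg, map_one, map_add, map_sub]
  ring

lemma hcomp (c : ℤ) (n : ℕ) :
    homogeneousComponent n (Pt c) =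
      (if n = 0 then q0 c else 0) + (if n = 2 then q2 c else 0) + (if n = 4 then q4 c else 0) + (if n = 6 then q6 c else 0) + (if n = 8 then q8 c else 0) + (if n = 10 then q10 c else 0) + (if n = 12 then q12 c else 0) + (if n = 14 then q14 c else 0) + (if n = 16 then q16 c else 0) + (if n = 18 then q18 c else 0) + (if n = 20 then q20 c else 0) := by
  rw [decomp c]
  simp only [map_add]
  rw [homogeneousComponent_of_mem ((mem_homogeneousSubmodule _ _).mpr (hq0 c)), homogeneousComponent_of_mem ((mem_homogeneousSubmodule _ _).mpr (hq2 c)), homogeneousComponent_of_mem ((mem_homogeneousSubmodule _ _).mpr (hq4 c)), homogeneousComponent_of_mem ((mem_homogeneousSubmodule _ _).mpr (hq6 c)), homogeneousComponent_of_mem ((mem_homogeneousSubmodule _ _).mpr (hq8 c)), homogeneousComponent_of_mem ((mem_homogeneousSubmodule _ _).mpr (hq10 c)), homogeneousComponent_of_mem ((mem_homogeneousSubmodule _ _).mpr (hq12 c)), homogeneousComponent_of_mem ((mem_homogeneousSubmodule _ _).mpr (hq14 c)), homogeneousComponent_of_mem ((mem_homogeneousSubmodule _ _).mpr (hq16 c)),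 homogeneousComponent_of_mem ((mem_homogeneousSubmodule _ _).mpr (hq18 c)), homogeneousComponent_of_mem ((mem_homogeneousSubmodule _ _).mpr (hq20 c))]

theorem pontryagin_number (c : ℤ) :
    Ideal.Quotient.mk (I c) (p c 1 ^ 2 * p c 2) =
      Ideal.Quotient.mk (I c) (C (384 * (c : ℚ) ^ 3 * (15 + 56 * (c : ℚ) ^ 2)) * (a ^ 3 * b ^ 5)) := by
  have hp1 : p c 1 = - q2 c := by
    rw [p]
    norm_num [hcomp c 2]
  have hp2 : p c 2 = q4 c := by
    rw [p]
    norm_num [hcomp c 4]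
  rw [hp1, hp2, Ideal.Quotient.eq, I]
  refine Ideal.mem_span_pair.mpr ⟨((C (540 : ℚ) * C ((c:ℚ)) ^ 0 * a ^ 0 * b ^ 2) + (C (5544 : ℚ) * C ((c:ℚ)) ^ 2 * a ^ 0 * b ^ 2) + (C (18816 : ℚ) * C ((c:ℚ)) ^ 4 * a ^ 0 * b ^ 2) + (C (24696 : ℚ) * C ((c:ℚ)) ^ 6 * a ^ 0 * b ^ 2) + (C (9604 : ℚ) * C ((c:ℚ)) ^ 8 * a ^ 0 * b ^ 2) + (C (10944 : ℚ) * C ((c:ℚ)) ^ 3 * a ^ 1 * b ^ 1) + (C (68544 : ℚ) * C ((c:ℚ)) ^ 5 * a ^ 1 * b ^ 1) + (C (94080 : ℚ) * C ((c:ℚ)) ^ 7 * a ^ 1 * b ^ 1) + (C (1584 : ℚ) * C ((c:ℚ)) ^ 0 * a ^ 2 * b ^ 0) + (C (21504 : ℚ) * C ((c:ℚ)) ^ 2 * a ^ 2 * b ^ 0) + (C (91728 : ℚ) * C ((c:ℚ)) ^ 4 * a ^ 2 * b ^ 0) + (C (116672 : ℚ) * C ((c:ℚ)) ^ 6 * a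 ^ 2 * b ^ 0)), ((C (1608 : ℚ) * C ((c:ℚ)) ^ 0 * a ^ 0 * b ^ 4) + (C (10416 : ℚ) * C ((c:ℚ)) ^ 2 * a ^ 0 * b ^ 4) + (C (14504 : ℚ) * C ((c:ℚ)) ^ 4 * a ^ 0 * b ^ 4) + (C (1152 : ℚ) * C ((c:ℚ)) ^ 3 * a ^ 1 * b ^ 3) + (C (672 : ℚ) * C ((c:ℚ)) ^ 0 * a ^ 2 * b ^ 2) + (C (1568 : ℚ) * C ((c:ℚ)) ^ 2 * a ^ 2 * b ^ 2) + (C (96 : ℚ) * C ((c:ℚ)) ^ 0 * a ^ 4 * b ^ 0)), ?_⟩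
  unfold q2 q4 a b
  simp only [map_mul, map_pow, map_ofNat, map_neg, map_one, map_add, map_sub]
  ring

end HW5
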